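/- There is a well-defined skew-derivation ∂_i^L on the positive half U⁺ of the quantum group (generated by the E_j): it is the unique linear map with ∂_i^L(1) = 0, ∂_i^L(E_j) = δ_{ij}, and ∂_i^L(fg) = v^{(α_i, ν)} ∂_i^L(f)·g + f·∂_i^L(g) for homogeneous f ∈ U⁺_μ, g ∈ U⁺_ν, where (·,·) is the symmetric bilinear form on the root lattice with (α_i, α_j) = c_{ij}. -/

import Mathlib

/-!
The positive half `U⁺` of the quantum group: the `ℚ(v)`-algebra generated by the `E_i`
subject to the quantum Serre relations, with its `ℕ^I`-grading by monomial content.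
-/

noncomputable section

/-- The indeterminate `v`. -/
def v : RatFunc ℚ := RatFunc.X

/-- Quantum integer `[r]`. -/
def qint (r : ℤ) : RatFunc ℚ := (v ^ r - v ^ (-r)) / (v - v⁻¹)

/-- Quantum factorial. -/
def qfact (n : ℕ) : RatFunc ℚ := ∏ i ∈ Finset.range n, qint ((i : ℤ) + 1)

/-- Gaussian binomial coefficient. -/
def qbinom (m : ℤ) (r : ℕ) : RatFunc ℚ :=
  (∏ i ∈ Finset.range r, qint (m - (i : ℤ))) / qfact r

open FreeAlgebra in
/-- The quantum Serre relations among the generators `E_i`. -/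
inductive SerreRel (I : Type) [DecidableEq I] (c : I → I → ℤ) :
    FreeAlgebra (RatFunc ℚ) I → FreeAlgebra (RatFunc ℚ) I → Prop
  | serre (i j : I) (h : i ≠ j) :
      SerreRel I c
        (∑ r ∈ Finset.range ((1 - c i j).toNat + 1),
          ((-1 : RatFunc ℚ) ^ r * qbinom (1 - c i j) r) •
            (ι _ i ^ r * ι _ j * ι _ i ^ ((1 - c i j).toNat - r))) 0

/-- The positive half `U⁺` of the quantum group. -/
def Uplus (I : Type) [DecidableEq I] (c : I → I → ℤ) : Type := RingQuot (SerreRel I c)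

instance (I : Type) [DecidableEq I] (c : I → I → ℤ) : Ring (Uplus I c) :=
  inferInstanceAs (Ring (RingQuot (SerreRel I c)))

instance (I : Type) [DecidableEq I] (c : I → I → ℤ) : Algebra (RatFunc ℚ) (Uplus I c) :=
  inferInstanceAs (Algebra (RatFunc ℚ) (RingQuot (SerreRel I c)))

variable {I : Type} [DecidableEq I]

/-- The generator `E_j` of `U⁺`. -/
def genE (c : I → I → ℤ) (j : I) : Uplus I c :=
  RingQuot.mkAlgHom (RatFunc ℚ) (SerreRel I c) (FreeAlgebra.ι _ j)

/-- `f` is homogeneous of degree `μ ∈ ℕ^I`: it lies in the span of the monomials in the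
`E_j` containing `E_j` exactly `μ j` times. -/
def Homog (c : I → I → ℤ) (μ : I → ℕ) (f : Uplus I c) : Prop :=
  f ∈ Submodule.span (RatFunc ℚ)
    {x : Uplus I c | ∃ l : List I, (∀ j, l.count j = μ j) ∧ x = (l.map (genE c)).prod}

/-!
The twisted Leibniz rule `∂(xy) = x ∂y + ∂x τy`, where `τ` is the algebra endomorphism
`E_j ↦ v^{c_ij} E_j` of `U⁺` (well defined because the Serre elements are homogeneous; it acts on
`U⁺_ν` as `v^{(α_i,ν)}`), says exactly that `x ↦ !![x, ∂x; 0, τx]` is multiplicative. So `∂` is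
the corner entry of the algebra map `U⁺ → M₂(U⁺)` extending `E_j ↦ !![E_j, δ_ij; 0, v^{c_ij} E_j]`,
which exists because the corner entry of the image of each Serre element vanishes: a direct
computation for `c_ab ∈ {0, -1}`. Uniqueness: the monomials span `U⁺`, and the rule determines `∂`
on them by induction on their length.
-/

lemma v_ne_zero : v ≠ 0 := RatFunc.X_ne_zero

lemma intDegree_v_mul_v : (v * v).intDegree = 2 := by
  rw [v, RatFunc.intDegree_mul RatFunc.X_ne_zero RatFunc.X_ne_zero, RatFunc.intDegree_X]; rfl

lemma v_sub_v_inv_ne_zero : v - v⁻¹ ≠ 0 := by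
  rw [sub_ne_zero]
  intro h
  have : v * v = 1 := by nth_rw 2 [h]; exact mul_inv_cancel₀ v_ne_zero
  simpa [intDegree_v_mul_v] using congrArg RatFunc.intDegree this

lemma v_add_v_inv_ne_zero : v + v⁻¹ ≠ 0 := by
  intro h
  have : v * v = -1 := by
    nth_rw 1 [eq_neg_of_add_eq_zero_left h]; rw [neg_mul, inv_mul_cancel₀ v_ne_zero]
  simpa [intDegree_v_mul_v] using congrArg RatFunc.intDegree this

lemma qint_one : qint 1 = 1 := by
  simp [qint, div_self v_sub_v_inv_ne_zero]

lemma qint_two : qint 2 = v + v⁻¹ := by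
  have := v_ne_zero
  rw [qint, div_eq_iff v_sub_v_inv_ne_zero]
  field_simp
  ring

lemma qbinom_zero (m : ℤ) : qbinom m 0 = 1 := by simp [qbinom, qfact]

lemma qbinom_one (m : ℤ) : qbinom m 1 = qint m := by simp [qbinom, qfact, qint_one]

lemma qbinom_two_two : qbinom 2 2 = 1 := by
  simp [qbinom, qfact, Finset.prod_range_succ, qint_one, qint_two, v_add_v_inv_ne_zero]

structure IsSimplyLaced {I : Type} (c : I → I → ℤ) : Prop where
  diag : ∀ i, c i i = 2
  symm : ∀ i j, c i j = c j i
  off_diag : ∀ i j, i ≠ j → c i j = 0 ∨ c i j = -1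

namespace Uplus

open FreeAlgebra (ι)

section SerreElement

variable {I : Type} (c : I → I → ℤ)

def serreElement (a b : I) : FreeAlgebra (RatFunc ℚ) I :=
  ∑ r ∈ Finset.range ((1 - c a b).toNat + 1),
    ((-1 : RatFunc ℚ) ^ r * qbinom (1 - c a b) r) •
      (ι _ a ^ r * ι _ b * ι _ a ^ ((1 - c a b).toNat - r))

variable {c}

lemma serreElement_of_eq_zero {a b : I} (h : c a b = 0) :
    serreElement c a b = ι _ b * ι _ a - ι _ a * ι _ b := by
  simp [serreElement, h, Finset.sum_range_succ, qbinom_zero, qbinom_one, qint_one]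
  abel

lemma serreElement_of_eq_neg_one {a b : I} (h : c a b = -1) :
    serreElement c a b =
      ι _ b * ι _ a ^ 2 - (v + v⁻¹) • (ι _ a * ι _ b * ι _ a) + ι _ a ^ 2 * ι _ b := by
  simp [serreElement, h, Finset.sum_range_succ, qbinom_zero, qbinom_one, qint_two,
    qbinom_two_two]
  rw [sub_eq_add_neg, ← neg_smul, neg_add_rev]

def rescale (w : I → RatFunc ℚ) :
    FreeAlgebra (RatFunc ℚ) I →ₐ[RatFunc ℚ] FreeAlgebra (RatFunc ℚ) I :=
  FreeAlgebra.lift _ fun j => w j • ι _ j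

lemma rescale_serreElement (w : I → RatFunc ℚ) (a b : I) :
    rescale w (serreElement c a b) = (w a ^ (1 - c a b).toNat * w b) • serreElement c a b := by
  rw [serreElement, map_sum, Finset.smul_sum]
  refine Finset.sum_congr rfl fun r hr => ?_
  have hr : r ≤ (1 - c a b).toNat := Nat.lt_succ_iff.mp (Finset.mem_range.mp hr)
  simp only [map_smul, map_mul, map_pow, rescale, FreeAlgebra.lift_ι_apply, smul_pow,
    smul_mul_smul_comm, smul_smul]
  rw [mul_right_comm (w a ^ r), ← pow_add, Nat.add_sub_cancel' hr, mul_comm]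

end SerreElement

variable {c : I → I → ℤ}

variable (c) in
abbrev mk : FreeAlgebra (RatFunc ℚ) I →ₐ[RatFunc ℚ] Uplus I c :=
  RingQuot.mkAlgHom (RatFunc ℚ) (SerreRel I c)

variable (c) in
lemma mk_surjective : Function.Surjective (mk c) :=
  RingQuot.mkAlgHom_surjective _ _

@[simp] lemma mk_ι (j : I) : mk c (ι _ j) = genE c j := rfl

lemma mk_serreElement {a b : I} (hab : a ≠ b) : mk c (serreElement c a b) = 0 :=
  (RingQuot.mkAlgHom_rel _ (SerreRel.serre a b hab)).trans (map_zero _)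

section Lift

variable {A : Type} [Semiring A] [Algebra (RatFunc ℚ) A]
  (F : FreeAlgebra (RatFunc ℚ) I →ₐ[RatFunc ℚ] A) (hF : ∀ a b, a ≠ b → F (serreElement c a b) = 0)

def lift : Uplus I c →ₐ[RatFunc ℚ] A :=
  RingQuot.liftAlgHom (RatFunc ℚ)
    ⟨F, by rintro _ _ ⟨a, b, hab⟩; exact (hF a b hab).trans (map_zero F).symm⟩

@[simp] lemma lift_mk (x : FreeAlgebra (RatFunc ℚ) I) : lift F hF (mk c x) = F x :=
  RingQuot.liftAlgHom_mkAlgHom_apply _ _ _ _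

end Lift

variable (c) in
def twist (i : I) : Uplus I c →ₐ[RatFunc ℚ] Uplus I c :=
  lift ((mk c).comp (rescale fun j => v ^ c i j)) fun a b hab => by
    simp [rescale_serreElement, mk_serreElement hab]

lemma twist_mk (i : I) (x : FreeAlgebra (RatFunc ℚ) I) :
    twist c i (mk c x) = mk c (rescale (fun j => v ^ c i j) x) := lift_mk _ _ _

lemma twist_genE (i j : I) : twist c i (genE c j) = v ^ c i j • genE c j := by
  simp [← mk_ι, twist_mk, rescale]

lemma twist_list_prod [Fintype I] (i : I) (l : List I) :
    twist c i (l.map (genE c)).prod =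
      v ^ (∑ j, c i j * (l.count j : ℤ)) • (l.map (genE c)).prod := by
  induction l with
  | nil => simp
  | cons a l ih =>
    have hsum : ∑ j, c i j * ((a :: l).count j : ℤ) = c i a + ∑ j, c i j * (l.count j : ℤ) := by
      simp only [List.count_cons, beq_iff_eq, Nat.cast_add, Nat.cast_ite, Nat.cast_one,
        Nat.cast_zero, mul_add, Finset.sum_add_distrib, mul_ite, mul_one, mul_zero,
        Finset.sum_ite_eq, Finset.mem_univ, if_true]
      ring
    rw [List.map_cons, List.prod_cons, map_mul, twist_genE, ih, hsum, zpow_add₀ v_ne_zero,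
      smul_mul_smul_comm, mul_comm]

lemma twist_of_homog [Fintype I] (i : I) {ν : I → ℕ} {g : Uplus I c} (hg : Homog c ν g) :
    twist c i g = v ^ (∑ j, c i j * (ν j : ℤ)) • g := by
  induction hg using Submodule.span_induction with
  | mem x hx =>
    obtain ⟨l, hl, rfl⟩ := hx
    simp only [twist_list_prod, hl]
  | zero => simp
  | add x y _ _ hx hy => rw [map_add, hx, hy, smul_add]
  | smul r x _ hx => rw [map_smul, hx, smul_comm]

section SkewDerivation

variable (c) in
def skewMatrixFree (i : I) :
    FreeAlgebra (RatFunc ℚ) I →ₐ[RatFunc ℚ] Matrix (Fin 2) (Fin 2) (Uplus I c) :=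
  FreeAlgebra.lift _ fun j => !![genE c j, if i = j then 1 else 0; 0, twist c i (genE c j)]

lemma skewMatrixFree_entries (i : I) (x : FreeAlgebra (RatFunc ℚ) I) :
    skewMatrixFree c i x 0 0 = mk c x ∧ skewMatrixFree c i x 1 0 = 0 ∧
      skewMatrixFree c i x 1 1 = twist c i (mk c x) := by
  induction x using FreeAlgebra.induction with
  | grade0 r => simp [Matrix.algebraMap_matrix_apply]
  | grade1 j => simp [skewMatrixFree]
  | mul x y hx hy => simp [Matrix.mul_apply, hx.1, hx.2.1, hx.2.2, hy.1, hy.2.1, hy.2.2]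
  | add x y hx hy => simp [hx.1, hx.2.1, hx.2.2, hy.1, hy.2.1, hy.2.2]

variable (c) in
def skewDerivFree (i : I) : FreeAlgebra (RatFunc ℚ) I →ₗ[RatFunc ℚ] Uplus I c :=
  Matrix.entryLinearMap (RatFunc ℚ) (Uplus I c) 0 1 ∘ₗ (skewMatrixFree c i).toLinearMap

lemma skewDerivFree_ι (i j : I) : skewDerivFree c i (ι _ j) = if i = j then 1 else 0 := by
  simp [skewDerivFree, skewMatrixFree]

lemma skewDerivFree_mul (i : I) (x y : FreeAlgebra (RatFunc ℚ) I) :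
    skewDerivFree c i (x * y) =
      mk c x * skewDerivFree c i y + skewDerivFree c i x * twist c i (mk c y) := by
  simp [skewDerivFree, Matrix.mul_apply, (skewMatrixFree_entries i x).1,
    (skewMatrixFree_entries i y).2.2]

-- `match_scalars` needs the canonical `ℕ`- and `ℤ`-algebra structures on `RatFunc ℚ`; the
-- default ones are routed through `ℚ[X]`.
attribute [local instance] Semiring.toNatAlgebra Ring.toIntAlgebra in
lemma skewDerivFree_serreElement (hc : IsSimplyLaced c) (i : I) {a b : I} (hab : a ≠ b) :
    skewDerivFree c i (serreElement c a b) = 0 := by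
  by_cases hia : i = a
  · subst hia
    rcases hc.off_diag i b hab with h | h
    · simp [serreElement_of_eq_zero h, skewDerivFree_mul, skewDerivFree_ι, twist_genE, hab, h]
    · simp [serreElement_of_eq_neg_one h, skewDerivFree_mul, skewDerivFree_ι, twist_genE,
        pow_two, hab, h, hc.diag, mul_add, add_mul]
      match_scalars <;> field_simp [v_ne_zero] <;> ring
  by_cases hib : i = b
  · subst hib
    rcases hc.off_diag a i hab with h | h
    · simp [serreElement_of_eq_zero h, skewDerivFree_mul, skewDerivFree_ι, twist_genE, hia,
        hc.symm i a, h]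
    · simp [serreElement_of_eq_neg_one h, skewDerivFree_mul, skewDerivFree_ι, twist_genE,
        pow_two, hia, hc.symm i a, h]
      match_scalars
      field_simp [v_ne_zero]
      ring
  rcases hc.off_diag a b hab with h | h
  · simp [serreElement_of_eq_zero h, skewDerivFree_mul, skewDerivFree_ι, hia, hib]
  · simp [serreElement_of_eq_neg_one h, skewDerivFree_mul, skewDerivFree_ι, pow_two, hia, hib]

variable (c) in
def skewMatrix (hc : IsSimplyLaced c) (i : I) :
    Uplus I c →ₐ[RatFunc ℚ] Matrix (Fin 2) (Fin 2) (Uplus I c) :=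
  lift (skewMatrixFree c i) fun a b hab => by
    ext p q
    fin_cases p <;> fin_cases q
    · simpa [mk_serreElement hab] using (skewMatrixFree_entries (c := c) i (serreElement c a b)).1
    · exact skewDerivFree_serreElement hc i hab
    · exact (skewMatrixFree_entries i _).2.1
    · simpa [mk_serreElement hab] using (skewMatrixFree_entries (c := c) i (serreElement c a b)).2.2

variable (c) in
def skewDeriv (hc : IsSimplyLaced c) (i : I) : Uplus I c →ₗ[RatFunc ℚ] Uplus I c :=
  Matrix.entryLinearMap (RatFunc ℚ) (Uplus I c) 0 1 ∘ₗ (skewMatrix c hc i).toLinearMap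

lemma skewMatrix_apply (hc : IsSimplyLaced c) (i : I) (x : Uplus I c) :
    skewMatrix c hc i x = !![x, skewDeriv c hc i x; 0, twist c i x] := by
  obtain ⟨x, rfl⟩ := mk_surjective c x
  obtain ⟨h00, h10, h11⟩ := skewMatrixFree_entries (c := c) i x
  ext p q
  fin_cases p <;> fin_cases q <;> simp [skewMatrix, skewDeriv, h00, h10, h11]

lemma skewDeriv_mul (hc : IsSimplyLaced c) (i : I) (x y : Uplus I c) :
    skewDeriv c hc i (x * y) = x * skewDeriv c hc i y + skewDeriv c hc i x * twist c i y := by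
  simpa [skewMatrix_apply, Matrix.mul_fin_two] using
    congrFun (congrFun (map_mul (skewMatrix c hc i) x y) 0) 1

lemma skewDeriv_one (hc : IsSimplyLaced c) (i : I) : skewDeriv c hc i 1 = 0 := by
  simp [skewDeriv]

lemma skewDeriv_genE (hc : IsSimplyLaced c) (i j : I) :
    skewDeriv c hc i (genE c j) = if i = j then 1 else 0 := by
  simp [skewDeriv, skewMatrix, ← mk_ι, skewMatrixFree]

end SkewDerivation

section Uniqueness

variable (c) in
lemma adjoin_range_genE : Algebra.adjoin (RatFunc ℚ) (Set.range (genE c)) = ⊤ := by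
  rw [Algebra.adjoin_range_eq_range_freeAlgebra_lift, AlgHom.range_eq_top]
  convert mk_surjective c
  ext j
  simp

variable (c) in
lemma span_monomials :
    Submodule.span (RatFunc ℚ) {x : Uplus I c | ∃ l : List I, x = (l.map (genE c)).prod} = ⊤ := by
  rw [eq_top_iff, ← Algebra.top_toSubmodule, ← adjoin_range_genE c, Algebra.adjoin_eq_span,
    ← FreeMonoid.mrange_lift]
  refine Submodule.span_mono ?_
  rintro _ ⟨w, rfl⟩
  exact ⟨w.toList, FreeMonoid.lift_apply _ _⟩

lemma homog_list_prod (l : List I) : Homog c (fun j => l.count j) (l.map (genE c)).prod :=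
  Submodule.subset_span ⟨l, fun _ => rfl, rfl⟩

variable [Fintype I]

variable (c) in
def IsSkewDerivation (i : I) (D : Uplus I c →ₗ[RatFunc ℚ] Uplus I c) : Prop :=
  ∀ (μ ν : I → ℕ) (f g : Uplus I c), Homog c μ f → Homog c ν g →
    D (f * g) = v ^ (∑ j, c i j * (ν j : ℤ)) • (D f * g) + f * D g

lemma isSkewDerivation_skewDeriv (hc : IsSimplyLaced c) (i : I) :
    IsSkewDerivation c i (skewDeriv c hc i) := fun _ _ f g _ hg => by
  rw [skewDeriv_mul, twist_of_homog i hg, mul_smul_comm, add_comm]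

lemma IsSkewDerivation.ext {i : I} {D D' : Uplus I c →ₗ[RatFunc ℚ] Uplus I c}
    (hD : IsSkewDerivation c i D) (hD' : IsSkewDerivation c i D') (h1 : D 1 = D' 1)
    (hgen : ∀ j, D (genE c j) = D' (genE c j)) : D = D' := by
  refine LinearMap.ext_on (span_monomials c) ?_
  rintro _ ⟨l, rfl⟩
  induction l with
  | nil => simpa using h1
  | cons a l ih =>
    have ha : Homog c (fun j => [a].count j) (genE c a) := by simpa using homog_list_prod [a]
    simp only [List.map_cons, List.prod_cons, hD _ _ _ _ ha (homog_list_prod l),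
      hD' _ _ _ _ ha (homog_list_prod l), hgen, ih]

end Uniqueness

end Uplus

/-- there is a unique linear map `∂_i^L : U⁺ → U⁺` with `∂_i^L(1) = 0`,
`∂_i^L(E_j) = δ_{ij}`, and the skew-Leibniz rule
`∂_i^L(fg) = v^{(α_i,ν)} ∂_i^L(f)·g + f·∂_i^L(g)` for homogeneous `f, g` of degrees
`μ, ν`, where `(α_i, ν) = Σ_j c_{ij} ν_j`. -/
theorem exists_unique_skew_derivation (I : Type) [DecidableEq I] [Fintype I]
    (c : I → I → ℤ) (hdiag : ∀ i, c i i = 2) (hsym : ∀ i j, c i j = c j i)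
    (hoff : ∀ i j, i ≠ j → c i j = 0 ∨ c i j = -1) (i : I) :
    ∃! D : Uplus I c →ₗ[RatFunc ℚ] Uplus I c,
      D 1 = 0 ∧
      (∀ j, D (genE c j) = if i = j then 1 else 0) ∧
      (∀ (μ ν : I → ℕ) (f g : Uplus I c), Homog c μ f → Homog c ν g →
        D (f * g) = (v ^ (∑ j, c i j * (ν j : ℤ))) • (D f * g) + f * D g) := by
  have hc : IsSimplyLaced c := ⟨hdiag, hsym, hoff⟩
  refine ⟨Uplus.skewDeriv c hc i, ⟨Uplus.skewDeriv_one hc i, Uplus.skewDeriv_genE hc i,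
    Uplus.isSkewDerivation_skewDeriv hc i⟩, ?_⟩
  rintro D ⟨h1, hgen, hD⟩
  exact Uplus.IsSkewDerivation.ext hD (Uplus.isSkewDerivation_skewDeriv hc i)
    (by rw [h1, Uplus.skewDeriv_one]) fun j => by rw [hgen, Uplus.skewDeriv_genE]
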